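/- With the hypotheses above (∂_k ∘ ∂_{k+1} = 0 between finite-dimensional inner product spaces), the kernel of the Laplacian L_k = ∂_{k+1}∂_{k+1}* + ∂_k*∂_k is linearly isomorphic to the homology H_k = ker(∂_k)/im(∂_{k+1}) (discrete Hodge theorem). -/

import Mathlib

/-! Pairing `L x` with `x` gives `‖∂_{k+1}* x‖² + ‖∂_k x‖²`, so harmonic chains are the cycles
orthogonal to the boundaries `im ∂_{k+1} = (ker ∂_{k+1}*)ᗮ`. Since the boundaries lie in the cycles,
every homology class then has exactly one harmonic representative: a cycle minus its orthogonal
projection onto the boundaries. -/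

namespace LinearMap

variable {𝕜 E F G : Type*} [RCLike 𝕜]
  [NormedAddCommGroup E] [InnerProductSpace 𝕜 E] [FiniteDimensional 𝕜 E]
  [NormedAddCommGroup F] [InnerProductSpace 𝕜 F] [FiniteDimensional 𝕜 F]
  [NormedAddCommGroup G] [InnerProductSpace 𝕜 G] [FiniteDimensional 𝕜 G]

theorem ker_adjoint_comp_self_add_adjoint_comp_self (S : E →ₗ[𝕜] F) (T : E →ₗ[𝕜] G) :
    ker (adjoint S ∘ₗ S + adjoint T ∘ₗ T) = ker S ⊓ ker T := by
  refine le_antisymm (fun x hx => ?_) (fun x ⟨hS, hT⟩ => by simp_all)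
  have hnorm : ‖S x‖ ^ 2 + ‖T x‖ ^ 2 = 0 := by
    simpa only [add_apply, comp_apply, inner_add_right, adjoint_inner_right, map_add,
      inner_self_eq_norm_sq, inner_zero_right, map_zero]
      using congrArg (fun y => RCLike.re (inner 𝕜 x y)) (mem_ker.mp hx)
  obtain ⟨hS, hT⟩ := (add_eq_zero_iff_of_nonneg (by positivity) (by positivity)).mp hnorm
  exact ⟨by simpa using hS, by simpa using hT⟩

theorem ker_self_comp_adjoint_add_adjoint_comp_self (d₂ : F →ₗ[𝕜] E) (d₁ : E →ₗ[𝕜] G) :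
    ker (d₂ ∘ₗ adjoint d₂ + adjoint d₁ ∘ₗ d₁) = (range d₂)ᗮ ⊓ ker d₁ := by
  have h := ker_adjoint_comp_self_add_adjoint_comp_self (adjoint d₂) d₁
  rwa [adjoint_adjoint, ← orthogonal_range] at h

end LinearMap

namespace Submodule

variable {𝕜 E : Type*} [RCLike 𝕜] [NormedAddCommGroup E] [InnerProductSpace 𝕜 E]
  {V K : Submodule 𝕜 E} [V.HasOrthogonalProjection]

noncomputable def orthogonalInfEquivQuotient (hVK : V ≤ K) :
    ↥(Vᗮ ⊓ K) ≃ₗ[𝕜] K ⧸ V.comap K.subtype :=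
  LinearEquiv.ofBijective ((V.comap K.subtype).mkQ ∘ₗ inclusion inf_le_right) (by
    refine ⟨?_, ?_⟩
    · rw [← LinearMap.ker_eq_bot, LinearMap.ker_eq_bot']
      intro x hx
      have hxV : (x : E) ∈ V := by simpa [Quotient.mk_eq_zero] using hx
      have : (x : E) = 0 := by simpa using V.inf_orthogonal_eq_bot.le ⟨hxV, x.2.1⟩
      exact Subtype.ext this
    · intro q
      obtain ⟨⟨y, hy⟩, rfl⟩ := (V.comap K.subtype).mkQ_surjective q
      have hproj : V.starProjection y ∈ K := hVK (V.starProjection_apply_mem y)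
      refine ⟨⟨y - V.starProjection y, V.sub_starProjection_mem_orthogonal y,
        K.sub_mem hy hproj⟩, ?_⟩
      simp [Quotient.eq])

end Submodule

/-- Discrete Hodge theorem: the kernel of the combinatorial Laplacian
`L_k = ∂_{k+1}∂_{k+1}* + ∂_k*∂_k` is linearly isomorphic to the homology
`H_k = ker(∂_k)/im(∂_{k+1})`. -/
theorem ker_laplacian_iso_homology
    {C2 C1 C0 : Type*}
    [NormedAddCommGroup C2] [InnerProductSpace ℝ C2] [FiniteDimensional ℝ C2]
    [NormedAddCommGroup C1] [InnerProductSpace ℝ C1] [FiniteDimensional ℝ C1]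
    [NormedAddCommGroup C0] [InnerProductSpace ℝ C0] [FiniteDimensional ℝ C0]
    (d2 : C2 →ₗ[ℝ] C1) (d1 : C1 →ₗ[ℝ] C0)
    (h : d1.comp d2 = 0) :
    Nonempty
      ((LinearMap.ker (d2 ∘ₗ LinearMap.adjoint d2 + LinearMap.adjoint d1 ∘ₗ d1)) ≃ₗ[ℝ]
        (LinearMap.ker d1 ⧸
          (LinearMap.range d2).comap (LinearMap.ker d1).subtype)) := by
  have hboundary : LinearMap.range d2 ≤ LinearMap.ker d1 := LinearMap.range_le_ker_iff.mpr h
  exact ⟨(LinearEquiv.ofEq _ _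
    (LinearMap.ker_self_comp_adjoint_add_adjoint_comp_self d2 d1)).trans
      (Submodule.orthogonalInfEquivQuotient hboundary)⟩
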